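/- Epsilon-characterization of the safety value level set: V_K x ≥ 0 if and only if for every ε > 0 there exists a control sequence u : ℕ → U with l (traj x u k) ≥ -ε for all k ≤ K. -/

import Mathlib

/-! By induction on the horizon, `safetyVal f l K x` is the supremum over control sequences of the
worst value of `l` along the first `K + 1` states of the trajectory: any sequence keeping `l ≥ c`
up to time `K` gives `c ≤ safetyVal f l K x`, and an `ε`-optimal control at the first step followed
by an `ε`-optimal sequence from the next state keeps `l ≥ safetyVal f l K x - ε`. Letting `ε → 0`
characterises the zero superlevel set. -/

def traj {X U : Type*} (f : X → U → X) (x : X) (u : ℕ → U) : ℕ → X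
  | 0 => x
  | k + 1 => f (traj f x u k) (u k)

noncomputable def safetyVal {X U : Type*} (f : X → U → X) (l : X → ℝ) : ℕ → X → ℝ
  | 0, x => l x
  | K + 1, x => min (l x) (⨆ u : U, safetyVal f l K (f x u))

section

variable {X U : Type*} (f : X → U → X) (l : X → ℝ)

theorem traj_succ_eq_traj_tail (x : X) (u : ℕ → U) (k : ℕ) :
    traj f x u (k + 1) = traj f (f x (u 0)) (fun n => u (n + 1)) k := by
  induction k with
  | zero => rfl
  | succ k ih => exact congrArg (f · (u (k + 1))) ih

theorem safetyVal_le_l (K : ℕ) (x : X) : safetyVal f l K x ≤ l x := by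
  cases K with
  | zero => exact le_rfl
  | succ K => exact min_le_left _ _

theorem safetyVal_succ_le_iSup (K : ℕ) (x : X) :
    safetyVal f l (K + 1) x ≤ ⨆ u : U, safetyVal f l K (f x u) :=
  min_le_right _ _

theorem bddAbove_range_safetyVal {M : ℝ} (hM : ∀ x, l x ≤ M) (K : ℕ) (x : X) :
    BddAbove (Set.range fun u : U => safetyVal f l K (f x u)) :=
  ⟨M, by rintro _ ⟨u, rfl⟩; exact (safetyVal_le_l f l K _).trans (hM _)⟩

theorem le_safetyVal_of_le_traj {M : ℝ} (hM : ∀ x, l x ≤ M) {c : ℝ} (K : ℕ) (x : X)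
    (u : ℕ → U) (hu : ∀ k ≤ K, c ≤ l (traj f x u k)) : c ≤ safetyVal f l K x := by
  induction K generalizing x u with
  | zero => exact hu 0 le_rfl
  | succ K ih =>
    have hnext : c ≤ safetyVal f l K (f x (u 0)) :=
      ih _ _ fun k hk => traj_succ_eq_traj_tail f x u k ▸ hu (k + 1) (by omega)
    exact le_min (hu 0 (Nat.zero_le _))
      (hnext.trans (le_ciSup (bddAbove_range_safetyVal f l hM K x) (u 0)))

theorem exists_safetyVal_sub_le_traj [Nonempty U] (K : ℕ) (x : X) {ε : ℝ} (hε : 0 < ε) :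
    ∃ u : ℕ → U, ∀ k ≤ K, safetyVal f l K x - ε ≤ l (traj f x u k) := by
  induction K generalizing x ε with
  | zero => exact ⟨fun _ => Classical.arbitrary U, fun k hk => by
      obtain rfl : k = 0 := by omega
      exact sub_le_self _ hε.le⟩
  | succ K ih =>
    obtain ⟨u₀, hu₀⟩ : ∃ u₀, safetyVal f l (K + 1) x - ε / 2 < safetyVal f l K (f x u₀) :=
      exists_lt_of_lt_ciSup ((sub_lt_self _ (half_pos hε)).trans_le
        (safetyVal_succ_le_iSup f l K x))
    obtain ⟨u, hu⟩ := ih (f x u₀) (half_pos hε)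
    refine ⟨fun | 0 => u₀ | n + 1 => u n, fun k hk => ?_⟩
    cases k with
    | zero => exact (sub_le_self _ hε.le).trans (safetyVal_le_l f l _ x)
    | succ k =>
      rw [traj_succ_eq_traj_tail]
      linarith [hu k (by omega)]

end

theorem safetyVal_nonneg_iff_eps {X U : Type*} [Nonempty U] (f : X → U → X) (l : X → ℝ)
    (hbdd : ∃ M : ℝ, ∀ x : X, l x ≤ M) (K : ℕ) (x : X) :
    safetyVal f l K x ≥ 0 ↔
      ∀ ε : ℝ, ε > 0 → ∃ u : ℕ → U, ∀ k ≤ K, l (traj f x u k) ≥ -ε := by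
  obtain ⟨M, hM⟩ := hbdd
  constructor
  · intro hV ε hε
    obtain ⟨u, hu⟩ := exists_safetyVal_sub_le_traj f l K x hε
    exact ⟨u, fun k hk => by linarith [hu k hk]⟩
  · intro h
    refine le_of_forall_pos_le_add fun ε hε => ?_
    obtain ⟨u, hu⟩ := h ε hε
    linarith [le_safetyVal_of_le_traj f l hM K x u hu]
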